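/- Lemma 2(1): Let |φ⟩ = Σ_{i=0}^{d-1} √μᵢ |i_A i_B⟩ be a bipartite pure state in Schmidt form, with d = min(d_A, d_B), μᵢ ≥ 0, Σᵢμᵢ = 1. Then ‖M_{α,β}^l(|φ⟩⟨φ|)‖_tr ≤ √((lα²+1)(lβ²+1)) + 2 Σ_{0≤i<j≤d-1} √(μᵢμⱼ). -/

import Mathlib

open Matrix
open scoped Kronecker ComplexOrder

/-- Column-stacking vectorization: `vec A (j, i) = A i j`. -/
def vec {m n : Type*} (A : Matrix m n ℂ) : n × m → ℂ := fun p => A p.2 p.1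

/-- The realignment map across the bipartition `A | B`. -/
def realign {A B : Type*} (ρ : Matrix (A × B) (A × B) ℂ) :
    Matrix (A × A) (B × B) ℂ :=
  Matrix.of fun r c => ρ (r.2, c.2) (r.1, c.1)

/-- Partial trace over the first tensor factor. -/
noncomputable def ptrA {A B : Type*} [Fintype A] (ρ : Matrix (A × B) (A × B) ℂ) :
    Matrix B B ℂ :=
  Matrix.of fun i j => ∑ k, ρ (k, i) (k, j)

/-- Partial trace over the second tensor factor. -/
noncomputable def ptrB {A B : Type*} [Fintype B] (ρ : Matrix (A × B) (A × B) ℂ) :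
    Matrix A A ℂ :=
  Matrix.of fun i j => ∑ k, ρ (i, k) (j, k)

/-- The positive semidefinite square root of a positive semidefinite matrix
(the definition of `Matrix.PosSemidef.sqrt` in the older Mathlib). -/
noncomputable def posSemidefSqrt {n 𝕜 : Type*} [Fintype n] [RCLike 𝕜] [DecidableEq n]
    {A : Matrix n n 𝕜} (hA : A.PosSemidef) : Matrix n n 𝕜 :=
  hA.1.eigenvectorUnitary.1 * diagonal ((↑) ∘ (√·) ∘ hA.1.eigenvalues) *
  (star hA.1.eigenvectorUnitary : Matrix n n 𝕜)

/-- The trace norm `‖A‖_tr = tr √(Aᴴ A)`, i.e. the sum of singular values. -/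
noncomputable def traceNorm {m n : Type*} [Fintype m] [Fintype n] [DecidableEq n]
    (A : Matrix m n ℂ) : ℝ :=
  ((posSemidefSqrt (Matrix.posSemidef_conjTranspose_mul_self A)).trace).re

/-- The matrix `M_{α,β}^l(ρ) = [[αβ E_{l×l}, α ω_l(tr_A ρ)ᵀ],
[β ω_l(tr_B ρ), R(ρ)]]`. -/
noncomputable def Mblock (α β : ℝ) (l : ℕ) {A B : Type*} [Fintype A] [Fintype B]
    (ρ : Matrix (A × B) (A × B) ℂ) :
    Matrix (Fin l ⊕ A × A) (Fin l ⊕ B × B) ℂ :=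
  Matrix.fromBlocks
    (Matrix.of fun _ _ => ((α * β : ℝ) : ℂ))
    (Matrix.of fun _ c => (α : ℂ) * _root_.vec (ptrA ρ) c)
    (Matrix.of fun r _ => (β : ℂ) * _root_.vec (ptrB ρ) r)
    (realign ρ)

/-!
Expanding the Schmidt form, `|φ⟩⟨φ| = ∑_{k,k'} √(μₖ μₖ') |u_k v_k⟩⟨u_k' v_k'|`, and the orthonormality
of the Schmidt vectors turns `M_{α,β}^l(|φ⟩⟨φ|)` into `∑_{k,k'} √(μₖ μₖ') x_{kk'} y_{kk'}ᵀ` with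
`x_{kk'} = (α δ_{kk'}, …, α δ_{kk'}, vec |u_k⟩⟨u_k'|)` and `y_{kk'}` built in the same way from `β`
and `v`. These columns have Euclidean norms `√(lα² + 1)`, `√(lβ² + 1)` for `k = k'` and `1`
otherwise. The trace norm of a sum of rank-one matrices `∑ xᵢ yᵢᵀ` is at most `∑ ‖xᵢ‖ ‖yᵢ‖`: it is
attained as `re tr (X* A)` for a contraction `X` (the partial isometry of the polar decomposition),
and `|yᵀ X* x| ≤ ‖x‖ ‖y‖`. The diagonal terms then add up to `√((lα²+1)(lβ²+1))` because `∑ μₖ = 1`,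
and the off-diagonal ones to `2 ∑_{k<k'} √(μₖ μₖ')`.
-/

section TraceNorm

variable {m n : Type*} [Fintype m] [Fintype n]

lemma star_dotProduct_self_eq_norm_sq (v : n → ℂ) :
    star v ⬝ᵥ v = ((‖WithLp.toLp 2 v‖ ^ 2 : ℝ) : ℂ) := by
  have h := inner_self_eq_norm_sq_to_K (𝕜 := ℂ) (WithLp.toLp 2 v)
  rw [EuclideanSpace.inner_eq_star_dotProduct, dotProduct_comm] at h
  exact_mod_cast h

lemma norm_mulVec_le_of_posSemidef_one_sub [DecidableEq n] {X : Matrix m n ℂ}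
    (hX : (1 - Xᴴ * X).PosSemidef) (z : n → ℂ) :
    ‖WithLp.toLp 2 (X *ᵥ z)‖ ≤ ‖WithLp.toLp 2 z‖ := by
  have h := hX.dotProduct_mulVec_nonneg z
  rw [sub_mulVec, one_mulVec, ← mulVec_mulVec, dotProduct_sub, dotProduct_mulVec,
    ← star_mulVec, sub_nonneg] at h
  rwa [star_dotProduct_self_eq_norm_sq, star_dotProduct_self_eq_norm_sq, Complex.real_le_real,
    sq_le_sq₀ (norm_nonneg _) (norm_nonneg _)] at h

lemma re_trace_conjTranspose_mul_vecMulVec_le [DecidableEq n] {X : Matrix m n ℂ}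
    (hX : (1 - Xᴴ * X).PosSemidef) (x : m → ℂ) (y : n → ℂ) :
    (Xᴴ * vecMulVec x y).trace.re ≤ ‖WithLp.toLp 2 x‖ * ‖WithLp.toLp 2 y‖ := by
  have htrace : (Xᴴ * vecMulVec x y).trace
      = inner ℂ (WithLp.toLp 2 (X *ᵥ star y)) (WithLp.toLp 2 x) := by
    rw [mul_vecMulVec, trace_vecMulVec, EuclideanSpace.inner_eq_star_dotProduct,
      WithLp.ofLp_toLp, WithLp.ofLp_toLp, star_mulVec, star_star, dotProduct_comm,
      dotProduct_mulVec, dotProduct_comm]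
  calc (Xᴴ * vecMulVec x y).trace.re
      ≤ ‖WithLp.toLp 2 (X *ᵥ star y)‖ * ‖WithLp.toLp 2 x‖ := by
        rw [htrace]
        exact (Complex.re_le_norm _).trans (norm_inner_le_norm _ _)
    _ ≤ ‖WithLp.toLp 2 (star y)‖ * ‖WithLp.toLp 2 x‖ := by
        gcongr
        exact norm_mulVec_le_of_posSemidef_one_sub hX _
    _ = ‖WithLp.toLp 2 x‖ * ‖WithLp.toLp 2 y‖ := by
        rw [mul_comm]
        simp [EuclideanSpace.norm_eq]

lemma exists_contraction_re_trace_mul_eq_traceNorm [DecidableEq n] (A : Matrix m n ℂ) :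
    ∃ X : Matrix m n ℂ, (1 - Xᴴ * X).PosSemidef ∧ (Xᴴ * A).trace.re = traceNorm A := by
  set hP := posSemidef_conjTranspose_mul_self A
  set V : Matrix n n ℂ := (hP.1.eigenvectorUnitary : Matrix n n ℂ)
  set ev : n → ℝ := hP.1.eigenvalues
  have hconj (D₁ D₂ : Matrix n n ℂ) :
      V * D₁ * star V * (V * D₂ * star V) = V * (D₁ * D₂) * star V := by
    simp only [Matrix.mul_assoc]
    rw [← Matrix.mul_assoc (star V) V, mem_unitaryGroup_iff'.mp hP.1.eigenvectorUnitary.2,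
      Matrix.one_mul]
  have hAA : Aᴴ * A = V * diagonal (fun i => (ev i : ℂ)) * star V := hP.1.spectral_theorem
  -- The junk value `(√0)⁻¹ = 0` makes `W` vanish on the kernel of `Aᴴ A`, so `A W` is a partial
  -- isometry.
  set D : Matrix n n ℂ := diagonal (fun i => (((√(ev i))⁻¹ : ℝ) : ℂ))
  have hD : star D = D := by
    rw [star_eq_conjTranspose, diagonal_conjTranspose]
    congr 1
    funext i
    simp
  set W := V * D * star V
  have hW : Wᴴ = W := by
    rw [← star_eq_conjTranspose]
    simp only [W, star_mul, star_star, hD, Matrix.mul_assoc]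
  refine ⟨A * W, ?_, ?_⟩
  · have hXX : (A * W)ᴴ * (A * W)
        = V * diagonal (fun i => (((√(ev i))⁻¹ * (ev i * (√(ev i))⁻¹) : ℝ) : ℂ)) * star V := by
      rw [conjTranspose_mul, hW, Matrix.mul_assoc, ← Matrix.mul_assoc Aᴴ, hAA, hconj, hconj,
        diagonal_mul_diagonal, diagonal_mul_diagonal]
      push_cast
      rfl
    have hone : (1 : Matrix n n ℂ) = V * diagonal (fun _ => 1) * star V := by
      rw [diagonal_one, Matrix.mul_one, mem_unitaryGroup_iff.mp hP.1.eigenvectorUnitary.2]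
    rw [hXX, hone, ← Matrix.sub_mul, ← Matrix.mul_sub, diagonal_sub, star_eq_conjTranspose]
    refine PosSemidef.mul_mul_conjTranspose_same (posSemidef_diagonal_iff.mpr fun i => ?_) _
    have hle : (√(ev i))⁻¹ * (ev i * (√(ev i))⁻¹) ≤ 1 := by
      rw [← mul_assoc, inv_mul_eq_div, Real.div_sqrt]
      exact mul_inv_le_one
    rw [← Complex.ofReal_one, ← Complex.ofReal_sub, Complex.zero_le_real, sub_nonneg]
    exact hle
  · have hsqrt : (fun i => (((√(ev i))⁻¹ : ℝ) : ℂ) * (ev i : ℂ)) = RCLike.ofReal ∘ (√·) ∘ ev := by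
      funext i
      rw [← Complex.ofReal_mul, inv_mul_eq_div, Real.div_sqrt]
      rfl
    rw [conjTranspose_mul, hW, Matrix.mul_assoc, hAA, hconj, diagonal_mul_diagonal, hsqrt]
    rfl

lemma traceNorm_sum_vecMulVec_le [DecidableEq n] {ι : Type*} (s : Finset ι) (x : ι → m → ℂ)
    (y : ι → n → ℂ) :
    traceNorm (∑ k ∈ s, vecMulVec (x k) (y k))
      ≤ ∑ k ∈ s, ‖WithLp.toLp 2 (x k)‖ * ‖WithLp.toLp 2 (y k)‖ := by
  obtain ⟨X, hX, hX_trace⟩ :=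
    exists_contraction_re_trace_mul_eq_traceNorm (∑ k ∈ s, vecMulVec (x k) (y k))
  rw [← hX_trace, Matrix.mul_sum, trace_sum, Complex.re_sum]
  exact Finset.sum_le_sum fun k _ => re_trace_conjTranspose_mul_vecMulVec_le hX _ _

end TraceNorm

lemma orthonormal_toLp_iff {κ ι : Type*} [Fintype ι] [DecidableEq κ] {u : κ → ι → ℂ} :
    Orthonormal ℂ (fun k => WithLp.toLp 2 (u k))
      ↔ ∀ k k', ∑ i, starRingEnd ℂ (u k i) * u k' i = if k = k' then 1 else 0 := by
  simp only [orthonormal_iff_ite, PiLp.inner_apply, RCLike.inner_apply, mul_comm]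

lemma Orthonormal.sum_mul_star_sum {κ ι : Type*} [Fintype κ] [Fintype ι] {u : κ → ι → ℂ}
    (hu : Orthonormal ℂ fun k => WithLp.toLp 2 (u k)) (c c' : κ → ℂ) :
    ∑ a, (∑ k, c k * u k a) * star (∑ k, c' k * u k a) = ∑ k, c k * star (c' k) := by
  have hcomb (c : κ → ℂ) :
      WithLp.toLp 2 (fun a => ∑ k, c k * u k a) = ∑ k, c k • WithLp.toLp 2 (u k) := by
    ext a
    simp
  have h := hu.inner_sum c' c Finset.univ
  rw [← hcomb, ← hcomb, PiLp.inner_apply] at h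
  simpa [mul_comm] using h

lemma sqrt_mul_star_sqrt_mul {μ : ℝ} (hμ : 0 ≤ μ) (z w : ℂ) :
    (√μ : ℂ) * z * star ((√μ : ℂ) * w) = μ * (z * star w) := by
  have hsq : (√μ : ℂ) * √μ = μ := by exact_mod_cast Real.mul_self_sqrt hμ
  rw [star_mul', show star (√μ : ℂ) = √μ from Complex.conj_ofReal _]
  linear_combination (z * star w) * hsq

section SchmidtColumn

variable {κ ι : Type*} [DecidableEq κ]

def schmidtColumn (l : ℕ) (γ : ℝ) (u : κ → ι → ℂ) (k k' : κ) : Fin l ⊕ ι × ι → ℂ :=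
  Sum.elim (fun _ => if k = k' then (γ : ℂ) else 0) (_root_.vec (vecMulVec (u k) (star (u k'))))

lemma norm_schmidtColumn [Fintype ι] {u : κ → ι → ℂ}
    (hu : ∀ k, ‖WithLp.toLp 2 (u k)‖ = 1) (l : ℕ) (γ : ℝ) (k k' : κ) :
    ‖WithLp.toLp 2 (schmidtColumn l γ u k k')‖ = √(l * (if k = k' then γ ^ 2 else 0) + 1) := by
  have hnorm (k : κ) : ∑ i, ‖u k i‖ ^ 2 = 1 := by
    simpa [hu k] using (EuclideanSpace.norm_sq_eq (WithLp.toLp 2 (u k))).symm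
  rw [EuclideanSpace.norm_eq]
  congr 1
  simp only [schmidtColumn, Fintype.sum_sum_type, Sum.elim_inl, Sum.elim_inr, _root_.vec,
    vecMulVec_apply, Pi.star_apply, norm_mul, norm_star, mul_pow, Fintype.sum_prod_type,
    ← Finset.mul_sum, ← Finset.sum_mul, hnorm]
  split_ifs <;> simp

end SchmidtColumn

section Schmidt

variable {κ A B : Type*} [Fintype κ]

noncomputable def schmidtVec (μ : κ → ℝ) (u : κ → A → ℂ) (v : κ → B → ℂ) : A × B → ℂ :=
  fun x => ∑ k, (√(μ k) : ℂ) * u k x.1 * v k x.2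

lemma ptrA_schmidtVec [Fintype A] {μ : κ → ℝ} (hμ : ∀ k, 0 ≤ μ k) {u : κ → A → ℂ}
    (hu : Orthonormal ℂ fun k => WithLp.toLp 2 (u k)) (v : κ → B → ℂ) :
    ptrA (vecMulVec (schmidtVec μ u v) (star (schmidtVec μ u v)))
      = ∑ k, (μ k : ℂ) • vecMulVec (v k) (star (v k)) := by
  ext b b'
  simp only [ptrA, schmidtVec, of_apply, vecMulVec_apply, Pi.star_apply, Matrix.sum_apply,
    Matrix.smul_apply, smul_eq_mul, mul_right_comm _ (u _ _) (v _ _)]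
  rw [hu.sum_mul_star_sum]
  exact Finset.sum_congr rfl fun k _ => sqrt_mul_star_sqrt_mul (hμ k) _ _

lemma ptrB_schmidtVec [Fintype B] {μ : κ → ℝ} (hμ : ∀ k, 0 ≤ μ k) (u : κ → A → ℂ)
    {v : κ → B → ℂ} (hv : Orthonormal ℂ fun k => WithLp.toLp 2 (v k)) :
    ptrB (vecMulVec (schmidtVec μ u v) (star (schmidtVec μ u v)))
      = ∑ k, (μ k : ℂ) • vecMulVec (u k) (star (u k)) := by
  ext a a'
  simp only [ptrB, schmidtVec, of_apply, vecMulVec_apply, Pi.star_apply, Matrix.sum_apply,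
    Matrix.smul_apply, smul_eq_mul]
  rw [hv.sum_mul_star_sum]
  exact Finset.sum_congr rfl fun k _ => sqrt_mul_star_sqrt_mul (hμ k) _ _

lemma realign_schmidtVec (μ : κ → ℝ) (u : κ → A → ℂ) (v : κ → B → ℂ) :
    realign (vecMulVec (schmidtVec μ u v) (star (schmidtVec μ u v)))
      = ∑ p : κ × κ, ((√(μ p.1) * √(μ p.2) : ℝ) : ℂ) •
          vecMulVec (_root_.vec (vecMulVec (u p.1) (star (u p.2))))
            (_root_.vec (vecMulVec (v p.1) (star (v p.2)))) := by
  ext r c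
  simp only [realign, schmidtVec, _root_.vec, of_apply, vecMulVec_apply, Pi.star_apply,
    Matrix.sum_apply, Matrix.smul_apply, smul_eq_mul, star_sum, Finset.sum_mul_sum,
    Fintype.sum_prod_type]
  refine Finset.sum_congr rfl fun k _ => Finset.sum_congr rfl fun k' _ => ?_
  rw [star_mul', star_mul', show star (√(μ k') : ℂ) = √(μ k') from Complex.conj_ofReal _]
  push_cast
  ring

lemma Mblock_schmidtVec [DecidableEq κ] [Fintype A] [Fintype B] {μ : κ → ℝ} (hμ : ∀ k, 0 ≤ μ k)
    (hsum : ∑ k, μ k = 1) {u : κ → A → ℂ} (hu : Orthonormal ℂ fun k => WithLp.toLp 2 (u k))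
    {v : κ → B → ℂ} (hv : Orthonormal ℂ fun k => WithLp.toLp 2 (v k)) (α β : ℝ) (l : ℕ) :
    Mblock α β l (vecMulVec (schmidtVec μ u v) (star (schmidtVec μ u v)))
      = ∑ p : κ × κ, vecMulVec (((√(μ p.1) * √(μ p.2) : ℝ) : ℂ) • schmidtColumn l α u p.1 p.2)
          (schmidtColumn l β v p.1 p.2) := by
  have hsq (k : κ) : (√(μ k) : ℂ) * √(μ k) = μ k := by
    exact_mod_cast Real.mul_self_sqrt (hμ k)
  have hsumC : ∑ k, (μ k : ℂ) = 1 := by exact_mod_cast hsum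
  rw [Mblock, ptrA_schmidtVec hμ hu, ptrB_schmidtVec hμ u hv, realign_schmidtVec]
  ext (s | r) (t | c) <;>
    simp only [Complex.ofReal_mul, _root_.vec, Complex.coe_smul, Matrix.sum_apply,
      Matrix.smul_apply, vecMulVec_apply, Pi.star_apply, RCLike.star_def, Complex.real_smul,
      Fintype.sum_prod_type, fromBlocks_apply₁₁, fromBlocks_apply₁₂, fromBlocks_apply₂₁,
      fromBlocks_apply₂₂, of_apply, schmidtColumn, smul_vecMulVec, Sum.elim_inl, Sum.elim_inr,
      mul_ite, ite_mul, zero_mul, mul_zero, smul_eq_mul, Finset.sum_ite_eq, Finset.mem_univ,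
      if_true, hsq]
  · rw [← Finset.sum_mul, hsumC, one_mul]
  · rw [Finset.mul_sum]
    exact Finset.sum_congr rfl fun k _ => by ring
  · rw [Finset.mul_sum]
    exact Finset.sum_congr rfl fun k _ => by ring

end Schmidt

lemma sum_prod_eq_sum_diag_add_two_nsmul_sum_lt {ι M : Type*} [Fintype ι] [LinearOrder ι]
    [AddCommMonoid M] (f : ι × ι → M) (hf : ∀ i j, f (i, j) = f (j, i)) :
    ∑ p, f p = ∑ i, f (i, i) + 2 • ∑ p with p.1 < p.2, f p := by
  have hsplit (p : ι × ι) : f p = (if p.1 = p.2 then f p else 0)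
      + (if p.1 < p.2 then f p else 0) + (if p.2 < p.1 then f p else 0) := by
    rcases lt_trichotomy p.1 p.2 with h | h | h
    · simp [h, h.ne, h.not_gt]
    · simp [h]
    · simp [h, h.ne', h.not_gt]
  have hswap : ∑ p : ι × ι, (if p.2 < p.1 then f p else 0)
      = ∑ p : ι × ι, if p.1 < p.2 then f p else 0 :=
    Fintype.sum_equiv (Equiv.prodComm ι ι) _ _ fun ⟨i, j⟩ => by
      simp only [Equiv.prodComm_apply, Prod.swap_prod_mk, hf j i]
  rw [Finset.sum_congr rfl fun p _ => hsplit p, Finset.sum_add_distrib, Finset.sum_add_distrib,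
    hswap, Finset.sum_filter, two_nsmul, add_assoc, Fintype.sum_prod_type]
  simp

theorem traceNorm_Mblock_pure_le_general {dA dB d : ℕ}
    (μ : Fin d → ℝ) (hμ : ∀ i, 0 ≤ μ i) (hsum : ∑ i, μ i = 1)
    (u : Fin d → Fin dA → ℂ) (v : Fin d → Fin dB → ℂ)
    (hu : ∀ k k', ∑ i, starRingEnd ℂ (u k i) * u k' i = if k = k' then 1 else 0)
    (hv : ∀ k k', ∑ i, starRingEnd ℂ (v k i) * v k' i = if k = k' then 1 else 0)
    (φ : Fin dA × Fin dB → ℂ)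
    (hφ : φ = fun x => ∑ k, (Real.sqrt (μ k) : ℂ) * u k x.1 * v k x.2)
    (α β : ℝ) (l : ℕ) :
    traceNorm (Mblock α β l (Matrix.vecMulVec φ (star φ))) ≤
      Real.sqrt ((l * α ^ 2 + 1) * (l * β ^ 2 + 1)) +
        2 * ∑ p ∈ Finset.univ.filter (fun p : Fin d × Fin d => p.1 < p.2),
              Real.sqrt (μ p.1 * μ p.2) := by
  have hu' : Orthonormal ℂ fun k => WithLp.toLp 2 (u k) := orthonormal_toLp_iff.mpr hu
  have hv' : Orthonormal ℂ fun k => WithLp.toLp 2 (v k) := orthonormal_toLp_iff.mpr hv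
  subst hφ
  calc traceNorm (Mblock α β l (vecMulVec (schmidtVec μ u v) (star (schmidtVec μ u v))))
      = traceNorm (∑ p : Fin d × Fin d,
          vecMulVec (((√(μ p.1) * √(μ p.2) : ℝ) : ℂ) • schmidtColumn l α u p.1 p.2)
            (schmidtColumn l β v p.1 p.2)) := by rw [Mblock_schmidtVec hμ hsum hu' hv']
    _ ≤ ∑ p : Fin d × Fin d, √(μ p.1) * √(μ p.2) *
          (√(l * (if p.1 = p.2 then α ^ 2 else 0) + 1) *
            √(l * (if p.1 = p.2 then β ^ 2 else 0) + 1)) := by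
        refine (traceNorm_sum_vecMulVec_le _ _ _).trans_eq (Finset.sum_congr rfl fun p _ => ?_)
        rw [WithLp.toLp_smul, norm_smul, norm_schmidtColumn hu'.norm_eq_one,
          norm_schmidtColumn hv'.norm_eq_one, Complex.norm_real,
          Real.norm_of_nonneg (by positivity), mul_assoc]
    _ = ∑ k, μ k * (√(l * α ^ 2 + 1) * √(l * β ^ 2 + 1))
          + 2 * ∑ p : Fin d × Fin d with p.1 < p.2, √(μ p.1 * μ p.2) := by
        rw [sum_prod_eq_sum_diag_add_two_nsmul_sum_lt _
          fun i j => by simp only [eq_comm (a := i)]; ring, nsmul_eq_mul]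
        congr 1
        · exact Finset.sum_congr rfl fun k _ => by simp [Real.mul_self_sqrt (hμ k)]
        · congr 1
          exact Finset.sum_congr rfl fun p hp => by
            simp [(Finset.mem_filter.mp hp).2.ne, Real.sqrt_mul (hμ _)]
    _ = _ := by rw [← Finset.sum_mul, hsum, one_mul, Real.sqrt_mul (by positivity)]

/-- Lemma 2(1): for a pure state in Schmidt form `|φ⟩ = ∑ᵢ √μᵢ |i_A i_B⟩`,
`‖M_{α,β}^l(|φ⟩⟨φ|)‖_tr ≤ √((lα²+1)(lβ²+1)) + 2 ∑_{i<j} √(μᵢ μⱼ)`. -/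
theorem traceNorm_Mblock_pure_le {dA dB d : ℕ} (hd : d = min dA dB)
    (μ : Fin d → ℝ) (hμ : ∀ i, 0 ≤ μ i) (hsum : ∑ i, μ i = 1)
    (u : Fin d → Fin dA → ℂ) (v : Fin d → Fin dB → ℂ)
    (hu : ∀ k k', ∑ i, starRingEnd ℂ (u k i) * u k' i = if k = k' then 1 else 0)
    (hv : ∀ k k', ∑ i, starRingEnd ℂ (v k i) * v k' i = if k = k' then 1 else 0)
    (φ : Fin dA × Fin dB → ℂ)
    (hφ : φ = fun x => ∑ k, (Real.sqrt (μ k) : ℂ) * u k x.1 * v k x.2)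
    (α β : ℝ) (l : ℕ) :
    traceNorm (Mblock α β l (Matrix.vecMulVec φ (star φ))) ≤
      Real.sqrt ((l * α ^ 2 + 1) * (l * β ^ 2 + 1)) +
        2 * ∑ p ∈ Finset.univ.filter (fun p : Fin d × Fin d => p.1 < p.2),
              Real.sqrt (μ p.1 * μ p.2) :=
  traceNorm_Mblock_pure_le_general μ hμ hsum u v hu hv φ hφ α β l
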